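/- Let ω ∈ ℝ^ν satisfy the Diophantine condition with constants a₀, b₀, let 0 < ε₀ ≤ 1, and for n ∈ ℤ^ν ∖ {0} set k_n = −(n·ω)/2. Suppose that to each m ∈ ℤ^ν ∖ {0} with k_m > 0 is assigned a closed interval [E_m⁻, E_m⁺] (with E_m⁻ ≤ E_m⁺), and that whenever m, m' ∈ ℤ^ν ∖ {0} satisfy 0 < k_m < k_{m'}, one has E_{m'}⁻ − E_m⁺ ≥ (min(ε₀, k_m/1024))²·(k_{m'} − k_m)². Then there exist constants a, b > 0, depending only on a₀, b₀ and ε₀ (one may take b = 4b₀), such that for all m, m' ∈ ℤ^ν ∖ {0} with k_m > 0, k_{m'} > 0, k_m ≠ k_{m'} and |m'| ≥ |m|, one has dist([E_m⁻, E_m⁺], [E_{m'}⁻, E_{m'}⁺]) ≥ a·|m'|^{−b}. -/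
import Mathlib

/-- The sup-norm of a lattice point `m ∈ ℤ^ν`, as a real number. -/
noncomputable def snorm {ν : ℕ} (m : Fin ν → ℤ) : ℝ :=
  ((Finset.univ.sup fun i => (m i).natAbs : ℕ) : ℝ)

/-- The pairing `n·ω = n₁ω₁ + … + n_ν ω_ν`. -/
noncomputable def dotp {ν : ℕ} (n : Fin ν → ℤ) (ω : Fin ν → ℝ) : ℝ :=
  ∑ i, (n i : ℝ) * ω i

lemma one_le_snorm {ν : ℕ} {m : Fin ν → ℤ} (hm : m ≠ 0) : 1 ≤ snorm m := by
  obtain ⟨i, hi⟩ := Function.ne_iff.mp hm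
  have h1 : 1 ≤ (m i).natAbs := Int.natAbs_pos.mpr hi
  have : 1 ≤ (Finset.univ.sup fun i => (m i).natAbs : ℕ) :=
    le_trans h1 (Finset.le_sup (f := fun i => (m i).natAbs) (Finset.mem_univ i))
  unfold snorm
  exact_mod_cast this

lemma snorm_sub_le {ν : ℕ} (m m' : Fin ν → ℤ) : snorm (m - m') ≤ snorm m + snorm m' := by
  unfold snorm
  rw [← Nat.cast_add]
  refine Nat.cast_le.mpr (Finset.sup_le fun i _ => ?_)
  calc ((m - m') i).natAbs = (m i - m' i).natAbs := by simp [Pi.sub_apply]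
    _ ≤ (m i).natAbs + (m' i).natAbs := Int.natAbs_sub_le _ _
    _ ≤ _ := Nat.add_le_add
        (Finset.le_sup (f := fun i => (m i).natAbs) (Finset.mem_univ i))
        (Finset.le_sup (f := fun i => (m' i).natAbs) (Finset.mem_univ i))

lemma dotp_sub {ν : ℕ} (m m' : Fin ν → ℤ) (ω : Fin ν → ℝ) :
    dotp (m - m') ω = dotp m ω - dotp m' ω := by
  unfold dotp
  rw [← Finset.sum_sub_distrib]
  refine Finset.sum_congr rfl fun i _ => ?_
  simp only [Pi.sub_apply]
  push_cast
  ring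

/-- Given the lower bound `E_{m'}⁻ - E_m⁺ ≥ (min(ε₀, k_m/1024))² (k_{m'} - k_m)²` for
`0 < k_m < k_{m'}`, there exist `a, b > 0` depending only on `a₀, b₀, ε₀` such that the
intervals `[E_m⁻, E_m⁺]` and `[E_{m'}⁻, E_{m'}⁺]` are at distance at least `a |m'|^{-b}`
whenever `k_m, k_{m'} > 0`, `k_m ≠ k_{m'}` and `|m'| ≥ |m|`. -/
theorem gaps_separated_of_E_increase
    (a₀ b₀ ε₀ : ℝ) (ha₀ : 0 < a₀) (ha₀' : a₀ < 1) (hε₀ : 0 < ε₀) (hε₀' : ε₀ ≤ 1) :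
    ∃ a b : ℝ, 0 < a ∧ 0 < b ∧
      ∀ (ν : ℕ), 1 ≤ ν → (ν : ℝ) < b₀ →
      ∀ ω : Fin ν → ℝ,
        -- the Diophantine condition
        (∀ n : Fin ν → ℤ, n ≠ 0 → a₀ * snorm n ^ (-b₀) ≤ |dotp n ω|) →
      ∀ Em Ep : (Fin ν → ℤ) → ℝ,
        (∀ m : Fin ν → ℤ, m ≠ 0 → 0 < -(dotp m ω) / 2 → Em m ≤ Ep m) →
        -- hypothesis: `E_{m'}⁻ - E_m⁺ ≥ (min(ε₀, k_m/1024))² (k_{m'} - k_m)²`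
        (∀ m m' : Fin ν → ℤ, m ≠ 0 → m' ≠ 0 →
          0 < -(dotp m ω) / 2 → -(dotp m ω) / 2 < -(dotp m' ω) / 2 →
          (min ε₀ (-(dotp m ω) / 2 / 1024)) ^ 2 *
            (-(dotp m' ω) / 2 - -(dotp m ω) / 2) ^ 2 ≤ Em m' - Ep m) →
        -- conclusion: `dist([E_m⁻, E_m⁺], [E_{m'}⁻, E_{m'}⁺]) ≥ a |m'|^{-b}`
        ∀ m m' : Fin ν → ℤ, m ≠ 0 → m' ≠ 0 →
          0 < -(dotp m ω) / 2 → 0 < -(dotp m' ω) / 2 →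
          -(dotp m ω) / 2 ≠ -(dotp m' ω) / 2 → snorm m ≤ snorm m' →
          ∀ x ∈ Set.Icc (Em m) (Ep m), ∀ y ∈ Set.Icc (Em m') (Ep m'),
            a * snorm m' ^ (-b) ≤ |x - y| := by
  refine ⟨(ε₀ * a₀ / 2048) ^ 2 * (a₀ / 2 * (2:ℝ) ^ (-b₀)) ^ 2, 4 * max b₀ 1,
    by positivity, by positivity, ?_⟩
  intro ν hν hνb₀ ω hdio Em Ep hEmEp hgap m m' hm hm' hkm hkm' hkne hsn x hx y hy
  have hb₀1 : (1:ℝ) < b₀ := lt_of_le_of_lt (by exact_mod_cast hν) hνb₀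
  have hb₀ : 0 < b₀ := by linarith
  have hmax : max b₀ 1 = b₀ := max_eq_left hb₀1.le
  set N := snorm m' with hN
  have hN1 : 1 ≤ N := one_le_snorm hm'
  have hN0 : 0 < N := lt_of_lt_of_le one_pos hN1
  set u : ℝ := N ^ (-b₀) with hu
  have hu0 : 0 < u := Real.rpow_pos_of_pos hN0 _
  have hu1 : u ≤ 1 := Real.rpow_le_one_of_one_le_of_nonpos hN1 (by linarith)
  set C1 : ℝ := ε₀ * a₀ / 2048 with hC1
  set C2 : ℝ := a₀ / 2 * (2:ℝ) ^ (-b₀) with hC2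
  have hC1pos : 0 < C1 := by positivity
  have hC2pos : 0 < C2 := by positivity
  -- `a * N ^ (-b) = (C1 * u)^2 * (C2 * u)^2`
  have hkey : C1 ^ 2 * C2 ^ 2 * N ^ (-(4 * max b₀ 1)) = (C1 * u) ^ 2 * (C2 * u) ^ 2 := by
    have h4 : N ^ (-(4 * max b₀ 1)) = u ^ (4:ℕ) := by
      rw [hmax, hu, ← Real.rpow_natCast (N ^ (-b₀)) 4, ← Real.rpow_mul hN0.le]
      congr 1
      push_cast
      ring
    rw [h4]; ring
  -- the key lower bound for any m₁ with 0 < k₁ and snorm m₁ ≤ N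
  have hklow : ∀ m₁ : Fin ν → ℤ, m₁ ≠ 0 → 0 < -(dotp m₁ ω) / 2 → snorm m₁ ≤ N →
      a₀ / 2 * u ≤ -(dotp m₁ ω) / 2 := by
    intro m₁ hm₁ hk₁ hsn₁
    have h1 := hdio m₁ hm₁
    have habs : |dotp m₁ ω| = -(dotp m₁ ω) := abs_of_neg (by linarith)
    have hmono : N ^ (-b₀) ≤ snorm m₁ ^ (-b₀) :=
      Real.rpow_le_rpow_of_nonpos (lt_of_lt_of_le one_pos (one_le_snorm hm₁)) hsn₁
        (by linarith)
    have : a₀ * N ^ (-b₀) ≤ -(dotp m₁ ω) := by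
      calc a₀ * N ^ (-b₀) ≤ a₀ * snorm m₁ ^ (-b₀) := by nlinarith
        _ ≤ |dotp m₁ ω| := h1
        _ = _ := habs
    rw [← hu] at this
    linarith
  -- the difference bound: for m₁ m₂ with k₁ < k₂, both snorms ≤ N
  have hdiff : ∀ m₁ m₂ : Fin ν → ℤ, snorm m₁ ≤ N → snorm m₂ ≤ N →
      -(dotp m₁ ω) / 2 < -(dotp m₂ ω) / 2 →
      C2 * u ≤ -(dotp m₂ ω) / 2 - -(dotp m₁ ω) / 2 := by
    intro m₁ m₂ h₁ h₂ hlt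
    have hne : m₁ - m₂ ≠ 0 := by
      intro h
      have : m₁ = m₂ := by rwa [sub_eq_zero] at h
      rw [this] at hlt; exact lt_irrefl _ hlt
    have hd := hdio (m₁ - m₂) hne
    rw [dotp_sub] at hd
    have habs : |dotp m₁ ω - dotp m₂ ω| = dotp m₁ ω - dotp m₂ ω :=
      abs_of_pos (by linarith)
    have hsle : snorm (m₁ - m₂) ≤ 2 * N := by
      have := snorm_sub_le m₁ m₂; linarith
    have hmono : (2 * N) ^ (-b₀) ≤ snorm (m₁ - m₂) ^ (-b₀) :=
      Real.rpow_le_rpow_of_nonpos (lt_of_lt_of_le one_pos (one_le_snorm hne)) hsle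
        (by linarith)
    have h2N : (2 * N) ^ (-b₀) = (2:ℝ) ^ (-b₀) * u := by
      rw [hu, Real.mul_rpow (by norm_num) hN0.le]
    have : a₀ * ((2:ℝ) ^ (-b₀) * u) ≤ dotp m₁ ω - dotp m₂ ω := by
      calc a₀ * ((2:ℝ) ^ (-b₀) * u) = a₀ * (2 * N) ^ (-b₀) := by rw [h2N]
        _ ≤ a₀ * snorm (m₁ - m₂) ^ (-b₀) :=
            mul_le_mul_of_nonneg_left hmono ha₀.le
        _ ≤ |dotp m₁ ω - dotp m₂ ω| := hd
        _ = _ := habs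
    have hCeq : C2 * u = a₀ * ((2:ℝ) ^ (-b₀) * u) / 2 := by rw [hC2]; ring
    linarith
  -- min bound
  have hminb : ∀ k₁ : ℝ, a₀ / 2 * u ≤ k₁ → C1 * u ≤ min ε₀ (k₁ / 1024) := by
    intro k₁ hk₁
    refine le_min ?_ ?_
    · rw [hC1]; nlinarith
    · rw [hC1]
      nlinarith [mul_nonneg (mul_nonneg (sub_nonneg.mpr hε₀') ha₀.le) hu0.le]
  -- the combined bound
  have hmain : ∀ m₁ m₂ : Fin ν → ℤ, m₁ ≠ 0 → m₂ ≠ 0 → snorm m₁ ≤ N → snorm m₂ ≤ N →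
      0 < -(dotp m₁ ω) / 2 → -(dotp m₁ ω) / 2 < -(dotp m₂ ω) / 2 →
      (C1 * u) ^ 2 * (C2 * u) ^ 2 ≤ Em m₂ - Ep m₁ := by
    intro m₁ m₂ hm₁ hm₂ h₁ h₂ hk₁ hlt
    have hmin := hminb _ (hklow m₁ hm₁ hk₁ h₁)
    have hdf := hdiff m₁ m₂ h₁ h₂ hlt
    have hg := hgap m₁ m₂ hm₁ hm₂ hk₁ hlt
    have h1 : (C1 * u) ^ 2 ≤ (min ε₀ (-(dotp m₁ ω) / 2 / 1024)) ^ 2 := by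
      apply pow_le_pow_left₀ (by positivity) hmin
    have h2 : (C2 * u) ^ 2 ≤ (-(dotp m₂ ω) / 2 - -(dotp m₁ ω) / 2) ^ 2 := by
      apply pow_le_pow_left₀ (by positivity) hdf
    calc (C1 * u) ^ 2 * (C2 * u) ^ 2
        ≤ (min ε₀ (-(dotp m₁ ω) / 2 / 1024)) ^ 2 *
            (-(dotp m₂ ω) / 2 - -(dotp m₁ ω) / 2) ^ 2 :=
          mul_le_mul h1 h2 (by positivity) (by positivity)
      _ ≤ Em m₂ - Ep m₁ := hg
  rw [hkey]
  rcases lt_or_gt_of_ne hkne with hlt | hlt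
  · have := hmain m m' hm hm' hsn le_rfl hkm hlt
    have hxy : x ≤ Ep m := hx.2
    have hyx : Em m' ≤ y := hy.1
    have : (C1 * u) ^ 2 * (C2 * u) ^ 2 ≤ y - x := by linarith
    calc (C1 * u) ^ 2 * (C2 * u) ^ 2 ≤ y - x := this
      _ ≤ |y - x| := le_abs_self _
      _ = |x - y| := abs_sub_comm _ _
  · have := hmain m' m hm' hm le_rfl hsn hkm' hlt
    have hxy : Em m ≤ x := hx.1
    have hyx : y ≤ Ep m' := hy.2
    have : (C1 * u) ^ 2 * (C2 * u) ^ 2 ≤ x - y := by linarith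
    calc (C1 * u) ^ 2 * (C2 * u) ^ 2 ≤ x - y := this
      _ ≤ |x - y| := le_abs_self _
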